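/- Let Φ be continuous, positive, T-periodic with mean Φ̄ and 0 < σ̃ < Φ̄. Suppose R* is a positive T-periodic solution of R' = μR(Φ(t)P₀(R) − σ̃/3) with μ > 0. Then for any positive solution R of the same ODE, there exist δ > 0 and C > 0 such that |R(t) − R*(t)| ≤ C e^{−δt} for all t > 0. -/

import Mathlib

noncomputable def P0 (x : ℝ) : ℝ := (x * (Real.cosh x / Real.sinh x) - 1) / x ^ 2

/-!
With `y = log R - log R*`, the equation gives `y' = μ Φ (t) (P0 (R* e^y) - P0 (R*))`. Since `P0` is
decreasing, `y'` has the sign of `-y`, so `y²` is nonincreasing and `R`, `R*` stay in a compact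
subset of `(0, ∞)` (for `R*` by periodicity). There `P0 ∘ exp` has derivative `≤ -κ < 0`, which
gives `y y' ≤ -μ (min Φ) κ y²` and hence exponential decay of `y`, and of `R - R*`.
-/

open Real Set

theorem le_of_hasDerivAt_le_of_nonneg {f g f' g' : ℝ → ℝ} (hf : ∀ x, HasDerivAt f (f' x) x)
    (hg : ∀ x, HasDerivAt g (g' x) x) (h0 : f 0 = g 0) (h' : ∀ x, 0 ≤ x → f' x ≤ g' x)
    {x : ℝ} (hx : 0 ≤ x) : f x ≤ g x := by
  have hmono : MonotoneOn (fun x => g x - f x) (Ici 0) :=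
    monotoneOn_of_hasDerivWithinAt_nonneg (convex_Ici 0)
      (fun y _ => ((hg y).sub (hf y)).continuousAt.continuousWithinAt)
      (fun y _ => ((hg y).sub (hf y)).hasDerivWithinAt)
      (fun y hy => sub_nonneg.2 (h' y (interior_subset hy)))
  simpa [h0] using hmono self_mem_Ici hx hx

theorem cube_div_three_le_mul_cosh_sub_sinh {u : ℝ} (hu : 0 ≤ u) :
    u ^ 3 / 3 ≤ u * cosh u - sinh u := by
  refine le_of_hasDerivAt_le_of_nonneg (fun x => ((hasDerivAt_pow 3 x).div_const 3))
    (fun x => ((hasDerivAt_id' x).mul (hasDerivAt_cosh x)).sub (hasDerivAt_sinh x))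
    (by simp) (fun x hx => ?_) hu
  have := self_le_sinh_iff.2 hx
  nlinarith

theorem pow_four_div_twelve_le_mul_sinh_sub_two_mul_cosh {u : ℝ} (hu : 0 ≤ u) :
    u ^ 4 / 12 ≤ u * sinh u - 2 * cosh u + 2 := by
  refine le_of_hasDerivAt_le_of_nonneg (fun x => ((hasDerivAt_pow 4 x).div_const 12))
    (fun x => (((hasDerivAt_id' x).mul (hasDerivAt_sinh x)).sub
      ((hasDerivAt_cosh x).const_mul 2)).add_const 2)
    (by simp) (fun x hx => ?_) hu
  have := cube_div_three_le_mul_cosh_sub_sinh hx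
  linarith

theorem pow_five_div_sixty_le_mul_cosh_sub_three_mul_sinh {u : ℝ} (hu : 0 ≤ u) :
    u ^ 5 / 60 ≤ u * cosh u - 3 * sinh u + 2 * u := by
  refine le_of_hasDerivAt_le_of_nonneg (fun x => ((hasDerivAt_pow 5 x).div_const 60))
    (fun x => (((hasDerivAt_id' x).mul (hasDerivAt_cosh x)).sub
      ((hasDerivAt_sinh x).const_mul 3)).add ((hasDerivAt_id' x).const_mul 2))
    (by simp) (fun x hx => ?_) hu
  have := pow_four_div_twelve_le_mul_sinh_sub_two_mul_cosh hx
  linarith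

theorem pow_six_div_le_mul_sinh_sub_four_mul_cosh {u : ℝ} (hu : 0 ≤ u) :
    u ^ 6 / 360 ≤ u * sinh u + u ^ 2 - 4 * cosh u + 4 := by
  refine le_of_hasDerivAt_le_of_nonneg (fun x => ((hasDerivAt_pow 6 x).div_const 360))
    (fun x => ((((hasDerivAt_id' x).mul (hasDerivAt_sinh x)).add (hasDerivAt_pow 2 x)).sub
      ((hasDerivAt_cosh x).const_mul 4)).add_const 4)
    (by simp) (fun x hx => ?_) hu
  have := pow_five_div_sixty_le_mul_cosh_sub_three_mul_sinh hx
  linarith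

noncomputable def P0' (x : ℝ) : ℝ := (2 - x * (cosh x / sinh x) - x ^ 2 / sinh x ^ 2) / x ^ 3

theorem hasDerivAt_P0 {x : ℝ} (hx : 0 < x) : HasDerivAt P0 (P0' x) x := by
  have hs : sinh x ≠ 0 := (sinh_pos_iff.2 hx).ne'
  have hcoth := (hasDerivAt_cosh x).div (hasDerivAt_sinh x) hs
  refine ((((hasDerivAt_id' x).mul hcoth).sub_const 1).div (hasDerivAt_pow 2 x)
    (by positivity)).congr_deriv ?_
  rw [P0', show cosh x * cosh x = sinh x ^ 2 + 1 by rw [← sq, cosh_sq]]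
  simp only [Pi.div_apply, Pi.mul_apply]
  field_simp
  ring

theorem two_div_45_mul_pow_six_le {x : ℝ} (hx : 0 ≤ x) :
    2 / 45 * x ^ 6 ≤ x * sinh x * cosh x + x ^ 2 - 2 * sinh x ^ 2 := by
  have h := pow_six_div_le_mul_sinh_sub_four_mul_cosh (mul_nonneg zero_le_two hx)
  rw [sinh_two_mul, cosh_two_mul, cosh_sq] at h
  nlinarith

theorem P0'_le {x : ℝ} (hx : 0 < x) : P0' x ≤ -(2 / 45 * x ^ 3 / sinh x ^ 2) := by
  have hs : 0 < sinh x := sinh_pos_iff.2 hx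
  have key : P0' x + 2 / 45 * x ^ 3 / sinh x ^ 2 =
      -(x * sinh x * cosh x + x ^ 2 - 2 * sinh x ^ 2 - 2 / 45 * x ^ 6) / (x ^ 3 * sinh x ^ 2) := by
    rw [P0']
    field_simp
    ring
  have : P0' x + 2 / 45 * x ^ 3 / sinh x ^ 2 ≤ 0 := by
    rw [key]
    exact div_nonpos_of_nonpos_of_nonneg (by linarith [two_div_45_mul_pow_six_le hx.le])
      (by positivity)
  linarith

theorem sub_mul_sub_le_neg_mul_sq {f f' : ℝ → ℝ} {D : Set ℝ} {c : ℝ} (hD : Convex ℝ D)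
    (hf : ∀ x ∈ D, HasDerivAt f (f' x) x) (hf' : ∀ x ∈ D, f' x ≤ -c) {a b : ℝ}
    (ha : a ∈ D) (hb : b ∈ D) : (a - b) * (f a - f b) ≤ -c * (a - b) ^ 2 := by
  wlog hab : b ≤ a generalizing a b
  · linarith [this hb ha (le_of_not_ge hab)]
  have hmvt := hD.image_sub_le_mul_sub_of_deriv_le
    (fun x hx => (hf x hx).continuousAt.continuousWithinAt)
    (fun x hx => (hf x (interior_subset hx)).differentiableAt.differentiableWithinAt)
    (fun x hx => (hf x (interior_subset hx)).deriv ▸ hf' x (interior_subset hx)) b hb a ha hab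
  nlinarith [mul_le_mul_of_nonneg_left hmvt (sub_nonneg.2 hab)]

theorem exists_log_sub_log_mul_P0_sub_le (L : ℝ) : ∃ κ > 0, ∀ x y : ℝ, 0 < x → 0 < y →
    |log x| ≤ L → |log y| ≤ L → (log x - log y) * (P0 x - P0 y) ≤ -κ * (log x - log y) ^ 2 := by
  refine ⟨2 / 45 * exp (-L) ^ 4 / sinh (exp L) ^ 2, by positivity, fun x y hx hy hxL hyL => ?_⟩
  have hexp (u : ℝ) : HasDerivAt (fun u => P0 (exp u)) (P0' (exp u) * exp u) u :=
    (hasDerivAt_P0 (exp_pos u)).comp u (hasDerivAt_exp u)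
  have hbound (u : ℝ) (hu : u ∈ Icc (-L) L) :
      P0' (exp u) * exp u ≤ -(2 / 45 * exp (-L) ^ 4 / sinh (exp L) ^ 2) := by
    have hlo : exp (-L) ≤ exp u := exp_le_exp.2 hu.1
    have hsinh : sinh (exp u) ^ 2 ≤ sinh (exp L) ^ 2 :=
      pow_le_pow_left₀ (sinh_pos_iff.2 (exp_pos u)).le (sinh_le_sinh.2 (exp_le_exp.2 hu.2)) 2
    calc P0' (exp u) * exp u ≤ -(2 / 45 * exp u ^ 3 / sinh (exp u) ^ 2) * exp u :=
          mul_le_mul_of_nonneg_right (P0'_le (exp_pos u)) (exp_pos u).le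
      _ = -(2 / 45 * exp u ^ 4 / sinh (exp u) ^ 2) := by ring
      _ ≤ -(2 / 45 * exp (-L) ^ 4 / sinh (exp L) ^ 2) := by
          have := sinh_pos_iff.2 (exp_pos u)
          gcongr
  simpa only [exp_log hx, exp_log hy] using
    sub_mul_sub_le_neg_mul_sq (convex_Icc (-L) L) (fun u _ => hexp u) hbound
      (abs_le.1 hxL) (abs_le.1 hyL)

theorem log_sub_log_mul_P0_sub_nonpos {x y : ℝ} (hx : 0 < x) (hy : 0 < y) :
    (log x - log y) * (P0 x - P0 y) ≤ 0 := by
  obtain ⟨κ, hκ, h⟩ := exists_log_sub_log_mul_P0_sub_le (max |log x| |log y|)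
  nlinarith [h x y hx hy (le_max_left _ _) (le_max_right _ _), sq_nonneg (log x - log y)]

theorem abs_sub_le_exp_mul_abs_log_sub {x y L : ℝ} (hx : 0 < x) (hy : 0 < y)
    (hxL : log x ≤ L) (hyL : log y ≤ L) : |x - y| ≤ exp L * |log x - log y| := by
  have := (convex_Iic L).norm_image_sub_le_of_norm_hasDerivWithin_le
    (fun u _ => (hasDerivAt_exp u).hasDerivWithinAt)
    (fun u hu => by rw [norm_of_nonneg (exp_pos u).le]; exact exp_le_exp.2 hu) hyL hxL
  simpa only [exp_log hx, exp_log hy, Real.norm_eq_abs] using this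

theorem abs_le_abs_mul_exp_of_mul_deriv_le {y y' : ℝ → ℝ} {δ : ℝ}
    (hy : ∀ t, 0 ≤ t → HasDerivAt y (y' t) t) (hδ : ∀ t, 0 ≤ t → y t * y' t ≤ -δ * y t ^ 2)
    {t : ℝ} (ht : 0 ≤ t) : |y t| ≤ |y 0| * exp (-δ * t) := by
  have hW (s : ℝ) (hs : 0 ≤ s) : HasDerivAt (fun s => y s ^ 2 * exp (2 * δ * s))
      (2 * exp (2 * δ * s) * (y s * y' s + δ * y s ^ 2)) s := by
    refine (((hy s hs).pow 2).mul ((hasDerivAt_id' s).const_mul (2 * δ)).exp).congr_deriv ?_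
    simp only [Pi.pow_apply, Nat.cast_ofNat]
    ring
  have hanti : AntitoneOn (fun s => y s ^ 2 * exp (2 * δ * s)) (Ici 0) :=
    antitoneOn_of_hasDerivWithinAt_nonpos (convex_Ici 0)
      (fun s hs => (hW s hs).continuousAt.continuousWithinAt)
      (fun s hs => (hW s (interior_subset hs)).hasDerivWithinAt)
      (fun s hs => mul_nonpos_of_nonneg_of_nonpos (by positivity)
        (by linarith [hδ s (interior_subset hs)]))
  have hWt : y t ^ 2 * exp (2 * δ * t) ≤ y 0 ^ 2 := by
    simpa using hanti self_mem_Ici ht ht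
  refine abs_le_of_sq_le_sq ?_ (by positivity)
  calc y t ^ 2 = y t ^ 2 * exp (2 * δ * t) * exp (-δ * t) ^ 2 := by
        rw [mul_assoc, ← exp_nat_mul, ← exp_add, Nat.cast_ofNat,
          show 2 * δ * t + 2 * (-δ * t) = 0 by ring, exp_zero, mul_one]
    _ ≤ (|y 0| * exp (-δ * t)) ^ 2 := by rw [mul_pow, sq_abs]; gcongr

theorem exists_mem_Icc_eq_of_periodic_on_nonneg {f : ℝ → ℝ} {T : ℝ} (hT : 0 < T)
    (hf : ∀ t, 0 ≤ t → f (t + T) = f t) {t : ℝ} (ht : 0 ≤ t) : ∃ s ∈ Icc 0 T, f t = f s := by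
  have hshift (n : ℕ) {s : ℝ} (hs : 0 ≤ s) : f (s + n * T) = f s := by
    induction n with
    | zero => simp
    | succ n ih =>
      rw [Nat.cast_succ, add_one_mul, ← add_assoc, hf _ (by positivity), ih]
  set n := ⌊t / T⌋₊
  have hlo : n * T ≤ t := (le_div_iff₀ hT).1 (Nat.floor_le (div_nonneg ht hT.le))
  have hhi : t < (n + 1) * T := (div_lt_iff₀ hT).1 (Nat.lt_floor_add_one _)
  refine ⟨t - n * T, ⟨by linarith, by linarith⟩, ?_⟩
  rw [← hshift n (s := t - n * T) (by linarith), sub_add_cancel]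

theorem exists_abs_le_of_periodic_on_nonneg {f : ℝ → ℝ} {T : ℝ} (hT : 0 < T)
    (hfc : ContinuousOn f (Icc 0 T)) (hf : ∀ t, 0 ≤ t → f (t + T) = f t) :
    ∃ B, ∀ t, 0 ≤ t → |f t| ≤ B := by
  obtain ⟨B, hB⟩ := isCompact_Icc.exists_bound_of_continuousOn hfc
  refine ⟨B, fun t ht => ?_⟩
  obtain ⟨s, hs, hst⟩ := exists_mem_Icc_eq_of_periodic_on_nonneg hT hf ht
  exact hst ▸ hB s hs

theorem exists_pos_le_of_periodic_on_nonneg {f : ℝ → ℝ} {T : ℝ} (hT : 0 < T)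
    (hfc : ContinuousOn f (Icc 0 T)) (hf : ∀ t, 0 ≤ t → f (t + T) = f t)
    (hpos : ∀ t, 0 ≤ t → 0 < f t) : ∃ m > 0, ∀ t, 0 ≤ t → m ≤ f t := by
  obtain ⟨s₀, hs₀, hmin⟩ := isCompact_Icc.exists_isMinOn (nonempty_Icc.2 hT.le) hfc
  refine ⟨f s₀, hpos s₀ hs₀.1, fun t ht => ?_⟩
  obtain ⟨s, hs, hst⟩ := exists_mem_Icc_eq_of_periodic_on_nonneg hT hf ht
  exact hst ▸ hmin hs

theorem hasDerivAt_log_sub_log {Φ F R S : ℝ → ℝ} {μ c t : ℝ} (hR : 0 < R t) (hS : 0 < S t)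
    (hR' : HasDerivAt R (μ * R t * (Φ t * F (R t) - c)) t)
    (hS' : HasDerivAt S (μ * S t * (Φ t * F (S t) - c)) t) :
    HasDerivAt (fun s => log (R s) - log (S s)) (μ * Φ t * (F (R t) - F (S t))) t :=
  ((hR'.log hR.ne').sub (hS'.log hS.ne')).congr_deriv (by field_simp; ring)

theorem exponential_convergence_to_periodic_general
    (T : ℝ) (hT : 0 < T) (Φ : ℝ → ℝ) (hΦc : Continuous Φ)
    (hΦpos : ∀ t, 0 < Φ t) (hΦper : ∀ t, Φ (t + T) = Φ t)
    (μ σ : ℝ) (hμ : 0 < μ)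
    (Rs : ℝ → ℝ) (hRspos : ∀ t, 0 ≤ t → 0 < Rs t)
    (hRsODE : ∀ t, 0 ≤ t → HasDerivAt Rs (μ * Rs t * (Φ t * P0 (Rs t) - σ / 3)) t)
    (hRsper : ∀ t, 0 ≤ t → Rs (t + T) = Rs t)
    (R : ℝ → ℝ) (hRpos : ∀ t, 0 ≤ t → 0 < R t)
    (hODE : ∀ t, 0 ≤ t → HasDerivAt R (μ * R t * (Φ t * P0 (R t) - σ / 3)) t) :
    ∃ δ > 0, ∃ C > 0, ∀ t > 0, |R t - Rs t| ≤ C * Real.exp (-δ * t) := by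
  set y : ℝ → ℝ := fun t => log (R t) - log (Rs t)
  have hy (t : ℝ) (ht : 0 ≤ t) : HasDerivAt y (μ * Φ t * (P0 (R t) - P0 (Rs t))) t :=
    hasDerivAt_log_sub_log (hRpos t ht) (hRspos t ht) (hODE t ht) (hRsODE t ht)
  have hy_le (t : ℝ) (ht : 0 ≤ t) : |y t| ≤ |y 0| := by
    simpa using abs_le_abs_mul_exp_of_mul_deriv_le (δ := 0) hy (fun s hs => by
      nlinarith [mul_le_mul_of_nonneg_left (log_sub_log_mul_P0_sub_nonpos (hRpos s hs)
        (hRspos s hs)) (mul_pos hμ (hΦpos s)).le]) ht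
  obtain ⟨B, hB⟩ := exists_abs_le_of_periodic_on_nonneg hT
    (fun s hs => ((hRsODE s hs.1).continuousAt.log (hRspos s hs.1).ne').continuousWithinAt)
    (fun t ht => by rw [hRsper t ht])
  obtain ⟨Φm, hΦm, hΦm_le⟩ := exists_pos_le_of_periodic_on_nonneg hT hΦc.continuousOn
    (fun t _ => hΦper t) (fun t _ => hΦpos t)
  set L := B + |y 0|
  have hRsL (t : ℝ) (ht : 0 ≤ t) : |log (Rs t)| ≤ L := by linarith [hB t ht, abs_nonneg (y 0)]
  have hRL (t : ℝ) (ht : 0 ≤ t) : |log (R t)| ≤ L := by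
    have := abs_add_le (y t) (log (Rs t))
    simp only [y, sub_add_cancel] at this
    linarith [hB t ht, hy_le t ht]
  obtain ⟨κ, hκ, hκ_le⟩ := exists_log_sub_log_mul_P0_sub_le L
  have hdecay (t : ℝ) (ht : 0 ≤ t) : |y t| ≤ |y 0| * exp (-(μ * Φm * κ) * t) :=
    abs_le_abs_mul_exp_of_mul_deriv_le hy (fun s hs => by
      have hκs := hκ_le _ _ (hRpos s hs) (hRspos s hs) (hRL s hs) (hRsL s hs)
      nlinarith [mul_le_mul_of_nonneg_left hκs (mul_pos hμ (hΦpos s)).le,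
        mul_le_mul_of_nonneg_left (hΦm_le s hs) (by positivity : 0 ≤ μ * κ * y s ^ 2)]) ht
  refine ⟨μ * Φm * κ, by positivity, exp L * |y 0| + 1, by positivity, fun t ht => ?_⟩
  calc |R t - Rs t| ≤ exp L * |y t| := abs_sub_le_exp_mul_abs_log_sub (hRpos t ht.le)
        (hRspos t ht.le) (abs_le.1 (hRL t ht.le)).2 (abs_le.1 (hRsL t ht.le)).2
    _ ≤ exp L * (|y 0| * exp (-(μ * Φm * κ) * t)) := by gcongr; exact hdecay t ht.le
    _ ≤ (exp L * |y 0| + 1) * exp (-(μ * Φm * κ) * t) := by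
        nlinarith [exp_pos (-(μ * Φm * κ) * t)]

theorem exponential_convergence_to_periodic
    (T : ℝ) (hT : 0 < T) (Φ : ℝ → ℝ) (hΦc : Continuous Φ)
    (hΦpos : ∀ t, 0 < Φ t) (hΦper : ∀ t, Φ (t + T) = Φ t)
    (μ σ : ℝ) (hμ : 0 < μ) (hσ : 0 < σ)
    (hσlt : σ < (1 / T) * ∫ t in (0 : ℝ)..T, Φ t)
    (Rs : ℝ → ℝ) (hRspos : ∀ t, 0 ≤ t → 0 < Rs t)
    (hRsODE : ∀ t, 0 ≤ t → HasDerivAt Rs (μ * Rs t * (Φ t * P0 (Rs t) - σ / 3)) t)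
    (hRsper : ∀ t, 0 ≤ t → Rs (t + T) = Rs t)
    (R : ℝ → ℝ) (hRpos : ∀ t, 0 ≤ t → 0 < R t)
    (hODE : ∀ t, 0 ≤ t → HasDerivAt R (μ * R t * (Φ t * P0 (R t) - σ / 3)) t) :
    ∃ δ > 0, ∃ C > 0, ∀ t > 0, |R t - Rs t| ≤ C * Real.exp (-δ * t) :=
  exponential_convergence_to_periodic_general T hT Φ hΦc hΦpos hΦper μ σ hμ Rs hRspos hRsODE hRsper
    R hRpos hODE
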